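/- The Clifford torus T = {(x₁,x₂,x₃,x₄) ∈ S³ : x₁² + x₂² = 1/2, x₃² + x₄² = 1/2} is a minimal surface in the round 3-sphere S³ ⊂ ℝ⁴: its mean curvature vector with respect to the induced metric from S³ vanishes. -/

import Mathlib

/-!
The torus is the product of two circles `c(φ) = (cos φ, sin φ)/√2`, and the normal is
`ν = (c(φ₁), -c(φ₂))`. Since `c'' = -c` and `|c'| = |c|`, the second fundamental form is
`K₁₁ = -g₁₁`, `K₁₂ = g₁₂ = 0`, `K₂₂ = g₂₂`, so the principal curvatures are `∓1` and the numerator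
`g₂₂ K₁₁ - 2 g₁₂ K₁₂ + g₁₁ K₂₂` of the trace vanishes identically.
-/

noncomputable section
open Real

/-- Partial derivative in the first variable. -/
def d1 (g : ℝ → ℝ → ℝ) (x y : ℝ) : ℝ := deriv (fun s => g s y) x

/-- Partial derivative in the second variable. -/
def d2 (g : ℝ → ℝ → ℝ) (x y : ℝ) : ℝ := deriv (fun t => g x t) y

/-- Components of the Clifford torus parametrization
`(φ₁,φ₂) ↦ (cos φ₁/√2, sin φ₁/√2, cos φ₂/√2, sin φ₂/√2)` in `ℝ⁴`. -/
def Y1 (p q : ℝ) : ℝ := Real.cos p / Real.sqrt 2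
def Y2 (p q : ℝ) : ℝ := Real.sin p / Real.sqrt 2
def Y3 (p q : ℝ) : ℝ := Real.cos q / Real.sqrt 2
def Y4 (p q : ℝ) : ℝ := Real.sin q / Real.sqrt 2

/-- Components of the unit normal `ν` of the Clifford torus inside `S³`. -/
def N1 (p q : ℝ) : ℝ := Real.cos p / Real.sqrt 2
def N2 (p q : ℝ) : ℝ := Real.sin p / Real.sqrt 2
def N3 (p q : ℝ) : ℝ := -(Real.cos q / Real.sqrt 2)
def N4 (p q : ℝ) : ℝ := -(Real.sin q / Real.sqrt 2)

section PartialDerivatives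

variable (f : ℝ → ℝ)

@[simp] lemma d1_of_fst : d1 (fun x _ => f x) = fun x _ => deriv f x := rfl

@[simp] lemma d2_of_fst : d2 (fun x _ => f x) = fun _ _ => 0 := by
  funext x y; simp [d2]

@[simp] lemma d1_of_snd : d1 (fun _ y => f y) = fun _ _ => 0 := by
  funext x y; simp [d1]

@[simp] lemma d2_of_snd : d2 (fun _ y => f y) = fun _ y => deriv f y := rfl

end PartialDerivatives

section Circle

variable (r : ℝ)

@[simp] lemma deriv_cos_div : deriv (fun t => cos t / r) = fun t => -(sin t / r) := by
  funext t; simp [deriv_div_const, neg_div]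

@[simp] lemma deriv_sin_div : deriv (fun t => sin t / r) = fun t => cos t / r := by
  funext t; simp [deriv_div_const]

lemma cos_div_sq_add_sin_div_sq (t : ℝ) : (cos t / r) ^ 2 + (sin t / r) ^ 2 = (r ^ 2)⁻¹ := by
  rw [div_pow, div_pow, ← add_div, cos_sq_add_sin_sq, one_div]

end Circle

/-- The Clifford torus `{x ∈ S³ : x₁²+x₂² = 1/2, x₃²+x₄² = 1/2}` is a minimal
surface in the round `S³`: `ν` is a unit vector tangent to `S³` (orthogonal to
the position vector), normal to the torus, and the trace of the second
fundamental form of the torus in `S³` (with respect to the induced metric)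
vanishes. -/
theorem cliffordTorus_minimal_in_S3 (p q : ℝ) :
    -- the parametrization lies in S³
    ((Y1 p q) ^ 2 + (Y2 p q) ^ 2 + (Y3 p q) ^ 2 + (Y4 p q) ^ 2 = 1) ∧
    -- ν is a unit vector
    ((N1 p q) ^ 2 + (N2 p q) ^ 2 + (N3 p q) ^ 2 + (N4 p q) ^ 2 = 1) ∧
    -- ν is tangent to S³ : ν ⟂ position vector
    (N1 p q * Y1 p q + N2 p q * Y2 p q + N3 p q * Y3 p q + N4 p q * Y4 p q = 0) ∧
    -- ν is normal to the torus
    (N1 p q * d1 Y1 p q + N2 p q * d1 Y2 p q + N3 p q * d1 Y3 p q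
      + N4 p q * d1 Y4 p q = 0) ∧
    (N1 p q * d2 Y1 p q + N2 p q * d2 Y2 p q + N3 p q * d2 Y3 p q
      + N4 p q * d2 Y4 p q = 0) ∧
    -- the trace γ^{ij} K_{ij} of the second fundamental form in S³ vanishes
    (let g11 := (d1 Y1 p q) ^ 2 + (d1 Y2 p q) ^ 2 + (d1 Y3 p q) ^ 2 + (d1 Y4 p q) ^ 2
     let g22 := (d2 Y1 p q) ^ 2 + (d2 Y2 p q) ^ 2 + (d2 Y3 p q) ^ 2 + (d2 Y4 p q) ^ 2
     let g12 := d1 Y1 p q * d2 Y1 p q + d1 Y2 p q * d2 Y2 p q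
       + d1 Y3 p q * d2 Y3 p q + d1 Y4 p q * d2 Y4 p q
     let K11 := N1 p q * d1 (d1 Y1) p q + N2 p q * d1 (d1 Y2) p q
       + N3 p q * d1 (d1 Y3) p q + N4 p q * d1 (d1 Y4) p q
     let K12 := N1 p q * d2 (d1 Y1) p q + N2 p q * d2 (d1 Y2) p q
       + N3 p q * d2 (d1 Y3) p q + N4 p q * d2 (d1 Y4) p q
     let K22 := N1 p q * d2 (d2 Y1) p q + N2 p q * d2 (d2 Y2) p q
       + N3 p q * d2 (d2 Y3) p q + N4 p q * d2 (d2 Y4) p q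
     (g22 * K11 - 2 * g12 * K12 + g11 * K22) / (g11 * g22 - g12 ^ 2) = 0) := by
  have hc (t : ℝ) : (cos t / √2) ^ 2 + (sin t / √2) ^ 2 = 1 / 2 := by
    rw [cos_div_sq_add_sin_div_sq, sq_sqrt zero_le_two, one_div]
  unfold Y1 Y2 Y3 Y4 N1 N2 N3 N4
  simp only [d1_of_fst, d2_of_fst, d1_of_snd, d2_of_snd, deriv_cos_div, deriv_sin_div,
    deriv.fun_neg', deriv_const']
  refine ⟨?_, ?_, ?_, ?_, ?_, ?_⟩
  · linear_combination hc p + hc q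
  · linear_combination hc p + hc q
  · linear_combination hc p - hc q
  · ring
  · ring
  · rw [div_eq_zero_iff]
    left
    ring
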